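/- Let U be the standard hypergraph potential built from ℓ∞ hyperedge norms: U(x) = (1/2)Σ_h w_h (min_u ‖x_h − u·1_h‖_∞)². For a local maximum index: if i_max is a global maximum coordinate of x, then every element z of the subdifferential L(x) = ∂U(x) satisfies z_{i_max} ≥ 0; symmetrically z_{i_min} ≤ 0 at a global minimum. -/
import Mathlib


open Finset

/-- `min_{u ∈ ℝ} ‖x_A − u·1_A‖_∞` for a hyperedge `A`. -/
noncomputable def linfShift {V : Type*} (A : Finset V) (x : V → ℝ) : ℝ :=
  sInf (Set.range fun u : ℝ => sSup ((fun i => |x i - u|) '' (A : Set V)))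

/-- The standard hypergraph potential
`U∞(x) = (1/2) Σ_h w_h (min_u ‖x_h − u·1_h‖_∞)²`. -/
noncomputable def UInf {V E : Type*} [Fintype E] (edge : E → Finset V)
    (w : E → ℝ) (x : V → ℝ) : ℝ :=
  (1 / 2) * ∑ e, w e * (linfShift (edge e) x) ^ 2

/-- The subdifferential of `f` at `x` (Euclidean inner product). -/
def subdiff {V : Type*} [Fintype V] (f : (V → ℝ) → ℝ) (x : V → ℝ) :
    Set (V → ℝ) :=
  {z | ∀ w, f x + ∑ i, (w i - x i) * z i ≤ f w}

lemma linfShift_empty {V : Type*} (x : V → ℝ) : linfShift (∅ : Finset V) x = 0 := by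
  simp [linfShift, Real.sSup_empty]

lemma linfShift_eq {V : Type*} (A : Finset V) (hA : A.Nonempty) (x : V → ℝ) :
    linfShift A x = (A.sup' hA x - A.inf' hA x) / 2 := by
  set M := A.sup' hA x with hM
  set m := A.inf' hA x with hm
  have hbdd : ∀ u : ℝ, BddAbove ((fun i => |x i - u|) '' (A : Set V)) :=
    fun u => (A.finite_toSet.image _).bddAbove
  have hne : ∀ u : ℝ, ((fun i => |x i - u|) '' (A : Set V)).Nonempty := by
    intro u; exact ⟨_, ⟨hA.choose, hA.choose_spec, rfl⟩⟩
  have hlb : ∀ u : ℝ, 0 ≤ sSup ((fun i => |x i - u|) '' (A : Set V)) := fun u =>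
    le_csSup_of_le (hbdd u) ⟨hA.choose, hA.choose_spec, rfl⟩ (abs_nonneg _)
  apply le_antisymm
  · -- take u = (M+m)/2
    have h1 : sSup ((fun i => |x i - (M + m)/2|) '' (A : Set V)) ≤ (M - m)/2 := by
      apply csSup_le (hne _)
      rintro y ⟨j, hj, rfl⟩
      have h2 : x j ≤ M := le_sup' x hj
      have h3 : m ≤ x j := inf'_le x hj
      rw [abs_le]; constructor <;> linarith
    calc linfShift A x ≤ sSup ((fun i => |x i - (M + m)/2|) '' (A : Set V)) := by
          apply csInf_le
          · exact ⟨0, by rintro y ⟨u, rfl⟩; exact hlb u⟩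
          · exact ⟨(M + m)/2, rfl⟩
      _ ≤ (M - m)/2 := h1
  · apply le_csInf (Set.range_nonempty _)
    rintro y ⟨u, rfl⟩
    obtain ⟨a, ha, haM⟩ := Finset.exists_mem_eq_sup' hA x
    obtain ⟨b, hb, hbm⟩ := Finset.exists_mem_eq_inf' hA x
    have h1 : |x a - u| ≤ sSup ((fun i => |x i - u|) '' (A : Set V)) :=
      le_csSup (hbdd u) ⟨a, ha, rfl⟩
    have h2 : |x b - u| ≤ sSup ((fun i => |x i - u|) '' (A : Set V)) :=
      le_csSup (hbdd u) ⟨b, hb, rfl⟩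
    have h3 : x a - u ≤ |x a - u| := le_abs_self _
    have h4 : u - x b ≤ |x b - u| := by rw [abs_sub_comm]; exact le_abs_self _
    have h5 : M = x a := haM
    have h6 : m = x b := hbm
    linarith

lemma inf'_le_sup'_self {V : Type*} (A : Finset V) (hA : A.Nonempty) (f : V → ℝ) :
    A.inf' hA f ≤ A.sup' hA f :=
  le_trans (Finset.inf'_le f hA.choose_spec) (Finset.le_sup' f hA.choose_spec)

lemma linfShift_nonneg {V : Type*} (A : Finset V) (x : V → ℝ) : 0 ≤ linfShift A x := by
  rcases A.eq_empty_or_nonempty with rfl | hA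
  · rw [linfShift_empty]
  · rw [linfShift_eq A hA]
    have := inf'_le_sup'_self A hA x
    linarith

lemma spread_bound_max {V : Type*} [DecidableEq V] (A : Finset V) (x : V → ℝ) (i : V)
    (hmax : ∀ j, x j ≤ x i) (t : ℝ) (ht : 0 ≤ t) :
    (linfShift A (Function.update x i (x i - t))) ^ 2 ≤ (linfShift A x) ^ 2 + (t/2)^2 := by
  rcases A.eq_empty_or_nonempty with rfl | hA
  · rw [linfShift_empty]; nlinarith [sq_nonneg (t/2)]
  · set x' := Function.update x i (x i - t) with hx'
    rw [linfShift_eq A hA, linfShift_eq A hA]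
    have hsup : A.sup' hA x' ≤ A.sup' hA x := by
      apply Finset.sup'_le
      intro j hj
      have : x' j ≤ x j := by
        by_cases h : j = i
        · subst h; simp only [hx', Function.update_self]; linarith
        · simp [hx', Function.update_of_ne h]
      exact le_trans this (le_sup' x hj)
    have hinf : min (A.inf' hA x) (x i - t) ≤ A.inf' hA x' := by
      apply Finset.le_inf'
      intro j hj
      by_cases h : j = i
      · subst h; simp only [hx', Function.update_self]; exact min_le_right _ _
      · simp only [hx', Function.update_of_ne h]
        exact le_trans (min_le_left _ _) (inf'_le x hj)
    have hsupx : A.sup' hA x ≤ x i := Finset.sup'_le hA x fun j _ => hmax j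
    have hss : A.inf' hA x' ≤ A.sup' hA x' := inf'_le_sup'_self A hA _
    have hspread : A.sup' hA x' - A.inf' hA x' ≤ max (A.sup' hA x - A.inf' hA x) t := by
      rcases le_total (A.inf' hA x) (x i - t) with h | h
      · have : min (A.inf' hA x) (x i - t) = A.inf' hA x := min_eq_left h
        rw [this] at hinf
        exact le_trans (by linarith) (le_max_left _ _)
      · have : min (A.inf' hA x) (x i - t) = x i - t := min_eq_right h
        rw [this] at hinf
        exact le_trans (by linarith) (le_max_right _ _)
    have h0 : 0 ≤ A.sup' hA x' - A.inf' hA x' := by linarith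
    rcases le_total (A.sup' hA x - A.inf' hA x) t with h | h
    · rw [max_eq_right h] at hspread
      have h1 : 0 ≤ A.sup' hA x - A.inf' hA x := by have := inf'_le_sup'_self A hA x; linarith
      nlinarith
    · rw [max_eq_left h] at hspread
      nlinarith

lemma spread_bound_min {V : Type*} [DecidableEq V] (A : Finset V) (x : V → ℝ) (i : V)
    (hmin : ∀ j, x i ≤ x j) (t : ℝ) (ht : 0 ≤ t) :
    (linfShift A (Function.update x i (x i + t))) ^ 2 ≤ (linfShift A x) ^ 2 + (t/2)^2 := by
  rcases A.eq_empty_or_nonempty with rfl | hA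
  · rw [linfShift_empty]; nlinarith [sq_nonneg (t/2)]
  · set x' := Function.update x i (x i + t) with hx'
    rw [linfShift_eq A hA, linfShift_eq A hA]
    have hinf : A.inf' hA x ≤ A.inf' hA x' := by
      apply Finset.le_inf'
      intro j hj
      have : x j ≤ x' j := by
        by_cases h : j = i
        · subst h; simp only [hx', Function.update_self]; linarith
        · simp [hx', Function.update_of_ne h]
      exact le_trans (inf'_le x hj) this
    have hsup : A.sup' hA x' ≤ max (A.sup' hA x) (x i + t) := by
      apply Finset.sup'_le
      intro j hj
      by_cases h : j = i
      · subst h; simp only [hx', Function.update_self]; exact le_max_right _ _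
      · simp only [hx', Function.update_of_ne h]
        exact le_trans (le_sup' x hj) (le_max_left _ _)
    have hinfx : x i ≤ A.inf' hA x := Finset.le_inf' hA x fun j _ => hmin j
    have hss : A.inf' hA x' ≤ A.sup' hA x' := inf'_le_sup'_self A hA _
    have hspread : A.sup' hA x' - A.inf' hA x' ≤ max (A.sup' hA x - A.inf' hA x) t := by
      rcases le_total (x i + t) (A.sup' hA x) with h | h
      · rw [max_eq_left h] at hsup
        exact le_trans (by linarith) (le_max_left _ _)
      · rw [max_eq_right h] at hsup
        exact le_trans (by linarith) (le_max_right _ _)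
    have h0 : 0 ≤ A.sup' hA x' - A.inf' hA x' := by linarith
    rcases le_total (A.sup' hA x - A.inf' hA x) t with h | h
    · rw [max_eq_right h] at hspread
      have h1 : 0 ≤ A.sup' hA x - A.inf' hA x := by have := inf'_le_sup'_self A hA x; linarith
      nlinarith
    · rw [max_eq_left h] at hspread
      nlinarith

lemma sign_helper (C zi : ℝ) (hC : 0 ≤ C) (h : ∀ t : ℝ, 0 < t → -(t * zi) ≤ C * t ^ 2) :
    0 ≤ zi := by
  by_contra hzi
  push_neg at hzi
  have ht : 0 < -zi / (C + 1) := div_pos (by linarith) (by linarith)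
  have := h _ ht
  have hC1 : (0:ℝ) < C + 1 := by linarith
  have hne : (C + 1) ≠ 0 := ne_of_gt hC1
  rw [div_pow, neg_div, neg_mul, div_mul_eq_mul_div, neg_neg, neg_sq, ← mul_div_assoc, div_le_div_iff₀ hC1 (by positivity)] at this
  nlinarith [mul_pos (neg_pos.mpr hzi) (neg_pos.mpr hzi)]

/-- maximum principle for the standard (ℓ∞) hypergraph
potential: every `z ∈ L(x) = ∂U∞(x)` satisfies `z_i ≥ 0` at a global maximum
coordinate of `x` and `z_i ≤ 0` at a global minimum coordinate. -/
theorem stmt12 {V E : Type*} [Fintype V] [Fintype E]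
    (edge : E → Finset V) (w : E → ℝ)
    (hw : ∀ e, 0 ≤ w e)
    (x : V → ℝ) (z : V → ℝ)
    (hz : z ∈ subdiff (UInf edge w) x) :
    (∀ i, (∀ j, x j ≤ x i) → 0 ≤ z i) ∧
    (∀ i, (∀ j, x i ≤ x j) → z i ≤ 0) := by
  classical
  have hCpos : (0:ℝ) ≤ (1/8) * ∑ e, w e := by
    have : (0:ℝ) ≤ ∑ e, w e := Finset.sum_nonneg fun e _ => hw e
    linarith
  have key : ∀ (i : V) (x' : V → ℝ) (t : ℝ), 0 < t →
      (∀ e : E, (linfShift (edge e) x') ^ 2 ≤ (linfShift (edge e) x) ^ 2 + (t/2)^2) →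
      (∀ j, j ≠ i → x' j = x j) →
      (x' i - x i) * z i ≤ ((1/8) * ∑ e, w e) * t ^ 2 := by
    intro i x' t ht hedge hoff
    have hsub := hz x'
    have hsum : ∑ j, (x' j - x j) * z j = (x' i - x i) * z i := by
      apply Finset.sum_eq_single
      · intro j _ hj; rw [hoff j hj]; ring
      · intro h; exact absurd (Finset.mem_univ i) h
    rw [hsum] at hsub
    have hU : UInf edge w x' ≤ UInf edge w x + ((1/8) * ∑ e, w e) * t ^ 2 := by
      unfold UInf
      have : ∑ e, w e * (linfShift (edge e) x') ^ 2 ≤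
          ∑ e, (w e * (linfShift (edge e) x) ^ 2 + w e * (t/2)^2) := by
        apply Finset.sum_le_sum
        intro e _
        have := hedge e
        nlinarith [hw e]
      rw [Finset.sum_add_distrib, ← Finset.sum_mul] at this
      have ht2 : (t/2)^2 = t^2/4 := by ring
      nlinarith
    linarith
  constructor
  · intro i hi
    apply sign_helper _ _ hCpos
    intro t ht
    have h := key i (Function.update x i (x i - t)) t ht
      (fun e => spread_bound_max (edge e) x i hi t ht.le)
      (fun j hj => Function.update_of_ne hj _ _)
    rw [Function.update_self] at h
    have heq : (x i - t - x i) * z i = -(t * z i) := by ring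
    rw [heq] at h
    exact h
  · intro i hi
    have h0 : 0 ≤ -z i := by
      apply sign_helper _ _ hCpos
      intro t ht
      have h := key i (Function.update x i (x i + t)) t ht
        (fun e => spread_bound_min (edge e) x i hi t ht.le)
        (fun j hj => Function.update_of_ne hj _ _)
      rw [Function.update_self] at h
      have heq : (x i + t - x i) * z i = -(t * -z i) := by ring
      rw [heq] at h
      exact h
    linarith
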